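/- Let T > 0, let u : [0,T] → ℝ be continuous, and let y₁, y₂, y₃ : [0,T] → ℝ be continuously differentiable with y₁'(t) = u(t), y₂'(t) = y₃(t), y₃'(t) = −y₂(t) + 2y₁(t)u(t) for all t ∈ [0,T], and y₁(0) = y₂(0) = y₃(0) = 0. Then: (i) if T ≤ π/2 then y₂(T) ≥ 0; (ii) if T ≤ π and y₁(T) = 0 then y₃(T) ≤ 0. (Hence this control system is not locally controllable in time T ≤ π.) -/

import Mathlib

/-! With `w = y₃ - y₁²` the system becomes the harmonic oscillator `y₂' = w + y₁²`, `w' = -y₂`,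
forced by the nonnegative term `y₁²`. By variation of constants,
`y₂(T) = ∫₀ᵀ y₁(s)² cos (T - s) ds` and `w(T) = -∫₀ᵀ y₁(s)² sin (T - s) ds`; the cosine is
nonnegative when `T ≤ π/2` and the sine when `T ≤ π`. Without integrals: the phases
`y₂ cos (T - t) + w sin (T - t)` and `y₂ sin (T - t) - w cos (T - t)` vanish at `0`, equal
`y₂(T)` and `-w(T)` at `T`, and have derivatives `y₁² cos (T - t)` and `y₁² sin (T - t)`. -/

open Set Real

lemma le_of_hasDerivWithinAt_Icc_nonneg {F F' : ℝ → ℝ} {a b : ℝ} (hab : a ≤ b)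
    (hF : ∀ t ∈ Icc a b, HasDerivWithinAt F (F' t) (Icc a b) t)
    (hF' : ∀ t ∈ Ioo a b, 0 ≤ F' t) : F a ≤ F b := by
  have hmono : MonotoneOn F (Icc a b) :=
    monotoneOn_of_hasDerivWithinAt_nonneg (convex_Icc a b)
      (fun t ht => (hF t ht).continuousWithinAt)
      (fun t ht => (hF t (interior_subset ht)).mono interior_subset)
      (by simpa only [interior_Icc] using hF')
  exact hmono (left_mem_Icc.mpr hab) (right_mem_Icc.mpr hab) hab

lemma hasDerivAt_cos_const_sub (T t : ℝ) :
    HasDerivAt (fun τ => cos (T - τ)) (sin (T - t)) t := by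
  simpa using ((hasDerivAt_id t).const_sub T).cos

lemma hasDerivAt_sin_const_sub (T t : ℝ) :
    HasDerivAt (fun τ => sin (T - τ)) (-cos (T - t)) t := by
  simpa using ((hasDerivAt_id t).const_sub T).sin

section OscillatorPhase

variable {x v : ℝ → ℝ} {f T t : ℝ} {s : Set ℝ}

lemma hasDerivWithinAt_oscillator_cos_phase (hx : HasDerivWithinAt x (v t + f) s t)
    (hv : HasDerivWithinAt v (-x t) s t) :
    HasDerivWithinAt (fun τ => x τ * cos (T - τ) + v τ * sin (T - τ))
      (f * cos (T - t)) s t :=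
  ((hx.mul (hasDerivAt_cos_const_sub T t).hasDerivWithinAt).add
    (hv.mul (hasDerivAt_sin_const_sub T t).hasDerivWithinAt)).congr_deriv (by ring)

lemma hasDerivWithinAt_oscillator_sin_phase (hx : HasDerivWithinAt x (v t + f) s t)
    (hv : HasDerivWithinAt v (-x t) s t) :
    HasDerivWithinAt (fun τ => x τ * sin (T - τ) - v τ * cos (T - τ))
      (f * sin (T - t)) s t :=
  ((hx.mul (hasDerivAt_sin_const_sub T t).hasDerivWithinAt).sub
    (hv.mul (hasDerivAt_cos_const_sub T t).hasDerivWithinAt)).congr_deriv (by ring)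

end OscillatorPhase

theorem forced_oscillator_sign {x v f : ℝ → ℝ} {T : ℝ} (hT : 0 ≤ T)
    (hf : ∀ t ∈ Icc 0 T, 0 ≤ f t)
    (hx : ∀ t ∈ Icc 0 T, HasDerivWithinAt x (v t + f t) (Icc 0 T) t)
    (hv : ∀ t ∈ Icc 0 T, HasDerivWithinAt v (-x t) (Icc 0 T) t)
    (hx₀ : x 0 = 0) (hv₀ : v 0 = 0) :
    (T ≤ π / 2 → 0 ≤ x T) ∧ (T ≤ π → v T ≤ 0) := by
  constructor
  · intro hTπ
    have hphase := le_of_hasDerivWithinAt_Icc_nonneg hT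
      (fun t ht => hasDerivWithinAt_oscillator_cos_phase (T := T) (hx t ht) (hv t ht))
      fun t ht => mul_nonneg (hf t (Ioo_subset_Icc_self ht))
        (cos_nonneg_of_mem_Icc ⟨by linarith [pi_pos, ht.2], by linarith [ht.1]⟩)
    simpa [hx₀, hv₀] using hphase
  · intro hTπ
    have hphase := le_of_hasDerivWithinAt_Icc_nonneg hT
      (fun t ht => hasDerivWithinAt_oscillator_sin_phase (T := T) (hx t ht) (hv t ht))
      fun t ht => mul_nonneg (hf t (Ioo_subset_Icc_self ht))
        (sin_nonneg_of_nonneg_of_le_pi (by linarith [ht.2]) (by linarith [ht.1]))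
    simpa [hx₀, hv₀] using hphase

theorem stmt14_general (T : ℝ) (hT : 0 < T) (u y₁ y₂ y₃ : ℝ → ℝ)
    (hd₁ : ∀ t ∈ Icc 0 T, HasDerivWithinAt y₁ (u t) (Icc 0 T) t)
    (hd₂ : ∀ t ∈ Icc 0 T, HasDerivWithinAt y₂ (y₃ t) (Icc 0 T) t)
    (hd₃ : ∀ t ∈ Icc 0 T, HasDerivWithinAt y₃ (-y₂ t + 2 * y₁ t * u t) (Icc 0 T) t)
    (hi₁ : y₁ 0 = 0) (hi₂ : y₂ 0 = 0) (hi₃ : y₃ 0 = 0) :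
    (T ≤ Real.pi / 2 → 0 ≤ y₂ T) ∧
      (T ≤ Real.pi → y₁ T = 0 → y₃ T ≤ 0) := by
  have hw : ∀ t ∈ Icc 0 T,
      HasDerivWithinAt (fun τ => y₃ τ - y₁ τ ^ 2) (-y₂ t) (Icc 0 T) t := fun t ht =>
    ((hd₃ t ht).sub ((hd₁ t ht).pow 2)).congr_deriv (by push_cast; ring)
  have hy₂ : ∀ t ∈ Icc 0 T,
      HasDerivWithinAt y₂ ((y₃ t - y₁ t ^ 2) + y₁ t ^ 2) (Icc 0 T) t := fun t ht => by
    simpa only [sub_add_cancel] using hd₂ t ht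
  obtain ⟨hcos, hsin⟩ := forced_oscillator_sign hT.le (fun t _ => sq_nonneg (y₁ t)) hy₂ hw hi₂
    (by simp [hi₁, hi₃])
  exact ⟨hcos, fun hTπ hy₁ => by simpa [hy₁] using hsin hTπ⟩

theorem stmt14 (T : ℝ) (hT : 0 < T) (u y₁ y₂ y₃ : ℝ → ℝ)
    (hu : ContinuousOn u (Icc 0 T))
    (hd₁ : ∀ t ∈ Icc 0 T, HasDerivWithinAt y₁ (u t) (Icc 0 T) t)
    (hd₂ : ∀ t ∈ Icc 0 T, HasDerivWithinAt y₂ (y₃ t) (Icc 0 T) t)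
    (hd₃ : ∀ t ∈ Icc 0 T, HasDerivWithinAt y₃ (-y₂ t + 2 * y₁ t * u t) (Icc 0 T) t)
    (hi₁ : y₁ 0 = 0) (hi₂ : y₂ 0 = 0) (hi₃ : y₃ 0 = 0) :
    (T ≤ Real.pi / 2 → 0 ≤ y₂ T) ∧
      (T ≤ Real.pi → y₁ T = 0 → y₃ T ≤ 0) :=
  stmt14_general T hT u y₁ y₂ y₃ hd₁ hd₂ hd₃ hi₁ hi₂ hi₃
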